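/- When E₁ = H², every multiplier between generalized Toeplitz kernels is a multiplier between the corresponding classical Toeplitz kernels: M(ker T_g^{H²,E₂}, ker T_h^{H²,E₂}) ⊆ M(ker T_g, ker T_h). -/

import Mathlib

/-!
Since `|Θ₂| = 1` on the circle, `⟪g Θ₂ f, Θ₂ e⟫ = ⟪g f, e⟫`, so for `f ∈ H²` we have
`Θ₂ f ∈ ker T_g^{H²,Θ₂H²}` iff `f ∈ ker T_g`. Given a multiplier `w` of the generalized kernels and
`f ∈ ker T_g ⊆ ker T_g^{H²,Θ₂H²}`, the function `w f` lies in `H²`, and `Θ₂ (w f) = w (Θ₂ f)` lies in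
`ker T_h^{H²,Θ₂H²}`; hence `w f ∈ ker T_h`. That `Θ₂ H² ⊆ H²` comes from the Fourier coefficients of
a product being the convolution of the coefficients of the factors.
-/

open MeasureTheory Complex Filter ComplexConjugate ENNReal

noncomputable section

/-- The unit circle, modeled as `ℝ/ℤ`. -/
abbrev Tc := UnitAddCircle

/-- The boundary coordinate function `z = e^{2πiθ}`. -/
def zB : Tc → ℂ := fun θ => fourier 1 θ

/-- Boundary Hardy space `H²(𝔻)`: `L²` functions with vanishing negative Fourier coefficients. -/
def H2 : Set (Tc → ℂ) := {f | MemLp f 2 volume ∧ ∀ n : ℤ, n < 0 → fourierCoeff f n = 0}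

/-- Boundary `H^∞(𝔻)`. -/
def Hinf : Set (Tc → ℂ) := {f | MemLp f ⊤ volume ∧ ∀ n : ℤ, n < 0 → fourierCoeff f n = 0}

/-- An inner function: bounded analytic with unimodular boundary values. -/
def IsInnerD (u : Tc → ℂ) : Prop := u ∈ Hinf ∧ ∀ᵐ θ : Tc, ‖u θ‖ = 1

/-- An outer function (boundary values): the radial limit of
`exp(∫ (ζ+z)/(ζ-z) w(ζ) dm(ζ))` for some integrable real `w` (namely `w = log|f|`). -/
def IsOuterD (p : Tc → ℂ) : Prop :=
  ∃ w : Tc → ℝ, Integrable w volume ∧ ∃ F : ℂ → ℂ,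
    (∀ z ∈ Metric.ball (0:ℂ) 1,
      F z = Complex.exp (∫ ζ : Tc, ((fourier 1 ζ + z) / (fourier 1 ζ - z)) * (w ζ : ℂ))) ∧
    (∀ᵐ θ : Tc, Tendsto (fun r : ℝ => F ((r : ℂ) * fourier 1 θ))
      (nhdsWithin 1 (Set.Iio 1)) (nhds (p θ)))

/-- The Nevanlinna–Smirnov class `N`: quotients `G/F` with `G, F ∈ H^∞`, `F` outer,
identified with boundary values. -/
def SmirnovD : Set (Tc → ℂ) :=
  {u | ∃ G F : Tc → ℂ, G ∈ Hinf ∧ F ∈ Hinf ∧ IsOuterD F ∧ ∀ᵐ θ : Tc, u θ * F θ = G θ}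

/-- The set of complex conjugates of the Smirnov class, `conj(N)`. -/
def ConjSmirnovD : Set (Tc → ℂ) := {u | ∃ v ∈ SmirnovD, ∀ᵐ θ : Tc, u θ = conj (v θ)}

/-- A nonzero essentially bounded symbol. -/
def SymbOk (g : Tc → ℂ) : Prop := MemLp g ⊤ volume ∧ ¬ (∀ᵐ θ : Tc, g θ = 0)

/-- The generalized Toeplitz kernel `ker T_g^{E₁,E₂} = {f ∈ E₁ : gf ⊥ E₂}`. -/
def gkerD (g : Tc → ℂ) (E₁ E₂ : Set (Tc → ℂ)) : Set (Tc → ℂ) :=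
  {f | f ∈ E₁ ∧ ∀ e ∈ E₂, (∫ θ : Tc, g θ * f θ * conj (e θ)) = 0}

/-- `K` is a generalized Toeplitz kernel relative to `(E₁, E₂)`. -/
def IsGTKD (E₁ E₂ K : Set (Tc → ℂ)) : Prop := ∃ g : Tc → ℂ, SymbOk g ∧ K = gkerD g E₁ E₂

/-- `K` is the minimal generalized Toeplitz kernel containing `k`. -/
def IsMinKerD (E₁ E₂ K : Set (Tc → ℂ)) (k : Tc → ℂ) : Prop :=
  IsGTKD E₁ E₂ K ∧ k ∈ K ∧ ∀ K', IsGTKD E₁ E₂ K' → k ∈ K' → K ⊆ K'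

/-- `k` is a maximal vector for `ker T_g^{E₁,E₂}`. -/
def IsMaxVecD (g : Tc → ℂ) (E₁ E₂ : Set (Tc → ℂ)) (k : Tc → ℂ) : Prop :=
  IsMinKerD E₁ E₂ (gkerD g E₁ E₂) k

/-- A closed subspace of `H²`. -/
def ClosedSub (E : Set (Tc → ℂ)) : Prop :=
  E ⊆ H2 ∧ (0 : Tc → ℂ) ∈ E ∧ (∀ f ∈ E, ∀ g ∈ E, f + g ∈ E) ∧
  (∀ c : ℂ, ∀ f ∈ E, c • f ∈ E) ∧
  ∀ f ∈ H2, (∀ ε : ℝ, 0 < ε → ∃ g ∈ E, eLpNorm (f - g) 2 volume < ENNReal.ofReal ε) → f ∈ E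

/-- The shift-invariant subspace `Θ·H²`. -/
def shiftSet (Θ : Tc → ℂ) : Set (Tc → ℂ) := (fun h => Θ * h) '' H2

/-- The multiplier space `M(X, Y) = {w : wX ⊆ Y}` (boundary multiplication). -/
def MultD (X Y : Set (Tc → ℂ)) : Set (Tc → ℂ) := {w | ∀ f ∈ X, w * f ∈ Y}

/-- A nontrivial set of functions: contains an element not a.e. zero. -/
def NontrivD (K : Set (Tc → ℂ)) : Prop := ∃ f ∈ K, ¬ (∀ᵐ θ : Tc, f θ = 0)

open AddCircle

section FourierCoeffMul

variable {T : ℝ} [Fact (0 < T)]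

theorem fourierCoeff_fourier_mul (f : AddCircle T → ℂ) (m k : ℤ) :
    fourierCoeff (fun t => fourier m t * f t) k = fourierCoeff f (k - m) := by
  simp only [fourierCoeff, smul_eq_mul, ← mul_assoc, ← fourier_add, neg_add_eq_sub, neg_sub]

theorem fourierCoeff_conj (f : AddCircle T → ℂ) (k : ℤ) :
    fourierCoeff (fun t => conj (f t)) k = conj (fourierCoeff f (-k)) := by
  simp only [fourierCoeff, smul_eq_mul, ← integral_conj, map_mul, fourier_neg, neg_neg]

theorem hasSum_conj_fourierCoeff_mul_fourierCoeff {f g : AddCircle T → ℂ}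
    (hf : MemLp f 2 haarAddCircle) (hg : MemLp g 2 haarAddCircle) :
    HasSum (fun k => conj (fourierCoeff f k) * fourierCoeff g k)
      (∫ t, conj (f t) * g t ∂haarAddCircle) := by
  have hcoeff : ∀ k, inner ℂ (hf.toLp f) (fourierBasis k) * inner ℂ (fourierBasis k) (hg.toLp g)
      = conj (fourierCoeff f k) * fourierCoeff g k := fun k => by
    rw [← inner_conj_symm, ← fourierBasis.repr_apply_apply, ← fourierBasis.repr_apply_apply,
      fourierBasis_repr, fourierBasis_repr, fourierCoeff_congr_ae hf.coeFn_toLp,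
      fourierCoeff_congr_ae hg.coeFn_toLp]
  have hinner : inner ℂ (hf.toLp f) (hg.toLp g) = ∫ t, conj (f t) * g t ∂haarAddCircle := by
    rw [L2.inner_def]
    refine integral_congr_ae ?_
    filter_upwards [hf.coeFn_toLp, hg.coeFn_toLp] with t hft hgt
    rw [hft, hgt, RCLike.inner_apply']
  simpa only [hcoeff, hinner] using fourierBasis.hasSum_inner_mul_inner (hf.toLp f) (hg.toLp g)

theorem hasSum_fourierCoeff_mul {f g : AddCircle T → ℂ}
    (hf : MemLp f 2 haarAddCircle) (hg : MemLp g 2 haarAddCircle) (n : ℤ) :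
    HasSum (fun k => fourierCoeff f (n - k) * fourierCoeff g k) (fourierCoeff (f * g) n) := by
  have hF : MemLp (fun t => fourier n t * conj (f t)) 2 haarAddCircle :=
    hf.star.mul' (memLp_top_of_bound (map_continuous _).aestronglyMeasurable 1
      (ae_of_all _ fun t => by rw [fourier_apply, Circle.norm_coe]))
  convert hasSum_conj_fourierCoeff_mul_fourierCoeff hF hg using 2
  · rw [fourierCoeff_fourier_mul, fourierCoeff_conj, conj_conj, neg_sub]
  · simp only [fourierCoeff, smul_eq_mul, map_mul, conj_conj, ← fourier_neg, Pi.mul_apply,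
      mul_assoc]

end FourierCoeffMul

theorem mul_mem_H2 {Θ f : Tc → ℂ} (hΘ : Θ ∈ Hinf) (hf : f ∈ H2) : Θ * f ∈ H2 := by
  refine ⟨hf.1.mul hΘ.1, fun n hn => ?_⟩
  have hsum := hasSum_fourierCoeff_mul (hΘ.1.mono_exponent le_top).haarAddCircle
    hf.1.haarAddCircle n
  have hterms : (fun k => fourierCoeff Θ (n - k) * fourierCoeff f k) = 0 := by
    ext k
    rcases lt_or_ge k 0 with hk | hk
    · rw [hf.2 k hk, mul_zero, Pi.zero_apply]
    · rw [hΘ.2 (n - k) (by omega), zero_mul, Pi.zero_apply]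
  rw [hterms] at hsum
  exact hsum.unique hasSum_zero

theorem shiftSet_subset_H2 {Θ : Tc → ℂ} (hΘ : Θ ∈ Hinf) : shiftSet Θ ⊆ H2 := by
  rintro _ ⟨f, hf, rfl⟩
  exact mul_mem_H2 hΘ hf

theorem gkerD_anti_right {g : Tc → ℂ} {E₁ E₂ E₂' : Set (Tc → ℂ)} (h : E₂ ⊆ E₂') :
    gkerD g E₁ E₂' ⊆ gkerD g E₁ E₂ :=
  fun _ hf => ⟨hf.1, fun e he => hf.2 e (h he)⟩

theorem integral_mul_mul_conj_mul_of_norm_eq_one {α : Type*} [MeasurableSpace α]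
    {μ : Measure α} {Θ : α → ℂ} (hΘ : ∀ᵐ x ∂μ, ‖Θ x‖ = 1) (a f e : α → ℂ) :
    ∫ x, a x * (Θ * f) x * conj ((Θ * e) x) ∂μ = ∫ x, a x * f x * conj (e x) ∂μ := by
  refine integral_congr_ae ?_
  filter_upwards [hΘ] with x hx
  have hunit : Θ x * conj (Θ x) = 1 := by
    rw [mul_conj, normSq_eq_norm_sq, hx, one_pow, Complex.ofReal_one]
  calc a x * (Θ x * f x) * conj (Θ x * e x)
      = a x * f x * conj (e x) * (Θ x * conj (Θ x)) := by rw [map_mul]; ring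
    _ = a x * f x * conj (e x) := by rw [hunit, mul_one]

theorem mul_mem_gkerD_shiftSet_iff {Θ g f : Tc → ℂ} (hΘ : IsInnerD Θ) (hf : f ∈ H2) :
    Θ * f ∈ gkerD g H2 (shiftSet Θ) ↔ f ∈ gkerD g H2 H2 := by
  simp only [gkerD, shiftSet, Set.mem_ofPred_eq, Set.forall_mem_image,
    integral_mul_mul_conj_mul_of_norm_eq_one hΘ.2, mul_mem_H2 hΘ.1 hf, hf, true_and]

theorem stmt6_general (Θ₂ g h : Tc → ℂ) (hΘ₂ : IsInnerD Θ₂) :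
    MultD (gkerD g H2 (shiftSet Θ₂)) (gkerD h H2 (shiftSet Θ₂)) ⊆
      MultD (gkerD g H2 H2) (gkerD h H2 H2) := by
  intro w hw f hf
  have hwf : w * f ∈ H2 := (hw f (gkerD_anti_right (shiftSet_subset_H2 hΘ₂.1) hf)).1
  rw [← mul_mem_gkerD_shiftSet_iff hΘ₂ hwf, mul_left_comm]
  exact hw _ ((mul_mem_gkerD_shiftSet_iff hΘ₂ hf.1).2 hf)

/-- When `E₁ = H²`, multipliers between generalized Toeplitz kernels are multipliers between
the corresponding classical Toeplitz kernels. -/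
theorem stmt6 (Θ₂ g h : Tc → ℂ) (hΘ₂ : IsInnerD Θ₂) (hg : SymbOk g) (hh : SymbOk h) :
    MultD (gkerD g H2 (shiftSet Θ₂)) (gkerD h H2 (shiftSet Θ₂)) ⊆
      MultD (gkerD g H2 H2) (gkerD h H2 H2) :=
  stmt6_general Θ₂ g h hΘ₂
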